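/- Let (K_{i(e)}, w_e, p_e)_{e∈E} be a contractive Markov system with average contracting rate a ∈ (0,1) on a metric space in which every set of finite diameter is relatively compact, with K_1,…,K_N nonempty open sets, each p_e|_{K_{i(e)}} uniformly continuous and bounded below by some δ > 0, with an invariant Borel probability measure μ and associated generalized Markov measure M. If each p_e|_{K_{i(e)}} is Dini-continuous, then M(Y) = 1, where Y := ⋂_{n∈ℤ} S^n(D) and D is the set of σ ∈ Σ_G for which the coding-map limit exists. -/

import Mathlib

open MeasureTheory Filter Topology
open scoped ENNReal

/-- A contractive Markov system (CMS) on a metric space `K`, with vertex set `Fin N`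
and (finite) edge set `E`. -/
structure CMS (K : Type*) [MetricSpace K] [MeasurableSpace K]
    (N : ℕ) (E : Type*) [Fintype E] where
  ι : E → Fin N
  τ : E → Fin N
  Ks : Fin N → Set K
  Ks_nonempty : ∀ i, (Ks i).Nonempty
  Ks_meas : ∀ i, MeasurableSet (Ks i)
  Ks_disj : ∀ i j, i ≠ j → Disjoint (Ks i) (Ks j)
  Ks_cover : (⋃ i, Ks i) = Set.univ
  w : E → K → K
  w_meas : ∀ e, Measurable (w e)
  w_maps : ∀ e, Set.MapsTo (w e) (Ks (ι e)) (Ks (τ e))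
  p : E → K → ℝ
  p_meas : ∀ e, Measurable (p e)
  p_nonneg : ∀ e x, 0 ≤ p e x
  p_sum_one : ∀ x, ∑ e, p e x = 1
  p_zero : ∀ e x, x ∉ Ks (ι e) → p e x = 0
  a : ℝ
  a_pos : 0 < a
  a_lt_one : a < 1
  contractive : ∀ i, ∀ x ∈ Ks i, ∀ y ∈ Ks i,
    ∑ e, p e x * dist (w e x) (w e y) ≤ a * dist x y

namespace CMS

variable {K : Type*} [MetricSpace K] [MeasurableSpace K]
  {N : ℕ} {E : Type*} [Fintype E]

/-- The Markov operator `U` acting on functions. -/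
noncomputable def Ufun (S : CMS K N E) (f : K → ℝ) : K → ℝ :=
  fun x => ∑ e, S.p e x * f (S.w e x)

/-- The adjoint Markov operator `U*` acting on measures. -/
noncomputable def adjoint (S : CMS K N E) (ν : Measure K) : Measure K :=
  ν.bind fun x => ∑ e, ENNReal.ofReal (S.p e x) • Measure.dirac (S.w e x)

/-- The weight `p_{e₁}(x) p_{e₂}(w_{e₁} x) ⋯` of a cylinder `[e₁, …, e_k]` started at `x`. -/
noncomputable def cylWeight (S : CMS K N E) : K → List E → ℝ
  | _, [] => 1
  | x, e :: es => S.p e x * S.cylWeight (S.w e x) es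

/-- `M` is the generalized Markov measure associated with the CMS and invariant measure `μ`. -/
def IsGMarkovMeasure [MeasurableSpace E] (S : CMS K N E)
    (μ : Measure K) (M : Measure (ℤ → E)) : Prop :=
  IsProbabilityMeasure M ∧
  ∀ (m : ℤ) (es : List E),
    M {σ | ∀ j : Fin es.length, σ (m + (j : ℕ)) = es.get j} =
      ENNReal.ofReal (∫ x, S.cylWeight x es ∂μ)

/-- `comp S σ n = w_{σ 0} ∘ w_{σ (-1)} ∘ ⋯ ∘ w_{σ (-n)}`. -/
noncomputable def comp (S : CMS K N E) (σ : ℤ → E) : ℕ → K → K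
  | 0, x => S.w (σ 0) x
  | n + 1, x => S.comp σ n (S.w (σ (-((n : ℤ) + 1))) x)

/-- `codeSeq S xs σ n = w_{σ 0} ∘ ⋯ ∘ w_{σ (-n)} (x_{i(σ (-n))})`. -/
noncomputable def codeSeq (S : CMS K N E) (xs : Fin N → K) (σ : ℤ → E) (n : ℕ) : K :=
  S.comp σ n (xs (S.ι (σ (-(n : ℤ)))))

end CMS

/-- The left shift `S` on `Σ = E^ℤ`. -/
def shiftL (E : Type*) : (ℤ → E) → ℤ → E := fun σ j => σ (j + 1)

/-- The `n`-fold left shift `S^n` on `Σ = E^ℤ`, `n ∈ ℤ`. -/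
def shiftZ (E : Type*) (n : ℤ) : (ℤ → E) → ℤ → E := fun σ j => σ (j + n)

namespace CMS

variable {K : Type*} [MetricSpace K] [MeasurableSpace K]
  {N : ℕ} {E : Type*} [Fintype E]

/-- The subshift `Σ_G` of (two-sided) paths of the directed multigraph. -/
def SigmaG (S : CMS K N E) : Set (ℤ → E) :=
  {σ | ∀ j : ℤ, S.τ (σ j) = S.ι (σ (j + 1))}

/-- The set `D` of paths where the coding limit exists. -/
def Dset (S : CMS K N E) (xs : Fin N → K) : Set (ℤ → E) :=
  {σ ∈ S.SigmaG | ∃ L : K, Tendsto (S.codeSeq xs σ) atTop (nhds L)}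

/-- `Y = ⋂_{n ∈ ℤ} S^n(D)`. -/
def Yset (S : CMS K N E) (xs : Fin N → K) : Set (ℤ → E) :=
  ⋂ n : ℤ, shiftZ E n '' S.Dset xs

/-- The coding map `F`. -/
noncomputable def F [Nonempty K] (S : CMS K N E) (xs : Fin N → K) (σ : ℤ → E) : K :=
  limUnder atTop (S.codeSeq xs σ)

end CMS

/-- The modulus of uniform continuity of `f` on the set `A`. -/
noncomputable def modulusOn {K : Type*} [MetricSpace K] (f : K → ℝ) (A : Set K) (t : ℝ) : ℝ :=
  sSup {s | ∃ x ∈ A, ∃ y ∈ A, dist x y ≤ t ∧ s = |f x - f y|}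

/-- Dini-continuity of `f` on `A`: `∫_0^c φ(t)/t dt < ∞` for some `c > 0`. -/
def DiniOn {K : Type*} [MetricSpace K] (f : K → ℝ) (A : Set K) : Prop :=
  ∃ c > 0, ∫⁻ t in Set.Ioc (0 : ℝ) c, ENNReal.ofReal (modulusOn f A t / t) < ⊤

/-!
Average contractivity turns `g x = d(x, x_{i(x)})` into a Lyapunov function, `Ug ≤ a g + c`, so
`g` is `μ`-integrable, and it makes consecutive coding points `F_m, F_{m+1}` satisfy
`E_M[d(F_m, F_{m+1})] ≤ C aᵐ`. For `a < b < 1`, Markov's inequality and Borel–Cantelli give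
`d(F_m, F_{m+1}) ≤ bᵐ` eventually, `M`-a.s., so the coding sequence is Cauchy and converges
because bounded sets are relatively compact. Cylinders across a non-edge have weight zero, so
`M`-a.e. sequence lies in `Σ_G`. The cylinder formula holds at every position, so the same
argument applies to every shift of the sequence, which gives `M(Y) = 1`.
-/

lemma Finset.sum_filter_lt_le_sum_mul_div {ι : Type*} (s : Finset ι) {w f : ι → ℝ}
    (hw : ∀ i ∈ s, 0 ≤ w i) (hf : ∀ i ∈ s, 0 ≤ f i) {t : ℝ} (ht : 0 < t) :
    ∑ i ∈ s with t < f i, w i ≤ (∑ i ∈ s, w i * f i) / t := by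
  rw [le_div_iff₀ ht, Finset.sum_mul]
  calc _ ≤ ∑ i ∈ s with t < f i, w i * f i := Finset.sum_le_sum fun i hi =>
        mul_le_mul_of_nonneg_left (Finset.mem_filter.1 hi).2.le (hw i (Finset.mem_filter.1 hi).1)
    _ ≤ ∑ i ∈ s, w i * f i := Finset.sum_le_sum_of_subset_of_nonneg (Finset.filter_subset _ _)
        fun i hi _ => mul_nonneg (hw i hi) (hf i hi)

lemma properSpace_of_isCompact_closure {K : Type*} [MetricSpace K]
    (h : ∀ A : Set K, Bornology.IsBounded A → IsCompact (closure A)) : ProperSpace K :=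
  ⟨fun x r => by
    simpa only [Metric.isClosed_closedBall.closure_eq] using
      h _ (Metric.isBounded_closedBall (x := x) (r := r))⟩

lemma exists_tendsto_of_eventually_dist_le_pow {K : Type*} [PseudoMetricSpace K] [CompleteSpace K]
    {f : ℕ → K} {b : ℝ} (hb₀ : 0 ≤ b) (hb₁ : b < 1)
    (h : ∀ᶠ m in atTop, dist (f m) (f (m + 1)) ≤ b ^ m) : ∃ L, Tendsto f atTop (𝓝 L) :=
  cauchySeq_tendsto_of_complete <| cauchySeq_of_summable_dist <|
    .of_norm_bounded_eventually_nat (summable_geometric_of_lt_one hb₀ hb₁) <|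
      h.mono fun m hm => by rwa [Real.norm_of_nonneg dist_nonneg]

def pastBlock {E : Type*} (σ : ℤ → E) (m : ℕ) : Fin (m + 1) → E := fun j => σ (j - m)

lemma pastBlock_succ {E : Type*} (σ : ℤ → E) (m : ℕ) :
    pastBlock σ (m + 1) = Fin.cons (σ (-(m + 1))) (pastBlock σ m) := by
  funext j
  refine Fin.cases ?_ (fun i => ?_) j
  · simp [pastBlock]
  · simp only [pastBlock, Fin.cons_succ, Fin.val_succ]
    push_cast
    ring_nf

def cylSet {E : Type*} (m : ℤ) (es : List E) : Set (ℤ → E) :=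
  {σ | ∀ j : Fin es.length, σ (m + (j : ℕ)) = es.get j}

lemma mem_cylSet_pastBlock_shiftZ {E : Type*} (σ : ℤ → E) (k : ℤ) (n : ℕ) :
    σ ∈ cylSet (k - n) (List.ofFn (pastBlock (shiftZ E k σ) n)) := by
  intro j
  simp only [List.get_ofFn, pastBlock, shiftZ, Fin.val_cast]
  congr 1
  ring


namespace CMS

variable {K : Type*} [MetricSpace K] [MeasurableSpace K] {N : ℕ} {E : Type*} [Fintype E]
  (S : CMS K N E) {μ : Measure K}

lemma mem_Ks_of_p_ne_zero {e : E} {x : K} (h : S.p e x ≠ 0) : x ∈ S.Ks (S.ι e) := by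
  by_contra hx
  exact h (S.p_zero e x hx)

lemma eq_of_mem_Ks {x : K} {i j : Fin N} (hi : x ∈ S.Ks i) (hj : x ∈ S.Ks j) : i = j := by
  by_contra h
  exact Set.disjoint_left.mp (S.Ks_disj i j h) hi hj

lemma p_le_one (e : E) (x : K) : S.p e x ≤ 1 :=
  S.p_sum_one x ▸ Finset.single_le_sum (fun e' _ => S.p_nonneg e' x) (Finset.mem_univ e)

lemma sum_p_mul_const (x : K) (c : ℝ) : ∑ e, S.p e x * c = c := by
  rw [← Finset.sum_mul, S.p_sum_one, one_mul]

lemma sum_p_mul_le_of_mem {x : K} {v : Fin N} (hx : x ∈ S.Ks v) {f g : E → ℝ}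
    (h : ∀ e, S.ι e = v → f e ≤ g e) : ∑ e, S.p e x * f e ≤ ∑ e, S.p e x * g e := by
  refine Finset.sum_le_sum fun e _ => ?_
  rcases eq_or_ne (S.p e x) 0 with h0 | h0
  · simp [h0]
  · exact mul_le_mul_of_nonneg_left (h e (S.eq_of_mem_Ks (S.mem_Ks_of_p_ne_zero h0) hx))
      (S.p_nonneg e x)

lemma exists_mem_Ks (x : K) : ∃ i, x ∈ S.Ks i :=
  Set.mem_iUnion.mp (S.Ks_cover ▸ Set.mem_univ x)

noncomputable def vertex (x : K) : Fin N := (S.exists_mem_Ks x).choose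

lemma mem_Ks_vertex (x : K) : x ∈ S.Ks (S.vertex x) := (S.exists_mem_Ks x).choose_spec

lemma vertex_eq {x : K} {i : Fin N} (h : x ∈ S.Ks i) : S.vertex x = i :=
  S.eq_of_mem_Ks (S.mem_Ks_vertex x) h

noncomputable def pathMap (es : List E) (x : K) : K := es.foldl (fun y e => S.w e y) x

@[simp] lemma pathMap_nil (x : K) : S.pathMap [] x = x := rfl

@[simp] lemma pathMap_cons (e : E) (es : List E) (x : K) :
    S.pathMap (e :: es) x = S.pathMap es (S.w e x) := rfl

@[simp] lemma cylWeight_nil (x : K) : S.cylWeight x [] = 1 := rfl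

@[simp] lemma cylWeight_cons (x : K) (e : E) (es : List E) :
    S.cylWeight x (e :: es) = S.p e x * S.cylWeight (S.w e x) es := rfl

lemma cylWeight_nonneg (es : List E) (x : K) : 0 ≤ S.cylWeight x es := by
  induction es generalizing x with
  | nil => simp
  | cons e es ih => exact mul_nonneg (S.p_nonneg e x) (ih _)

lemma cylWeight_le_one (es : List E) (x : K) : S.cylWeight x es ≤ 1 := by
  induction es generalizing x with
  | nil => simp
  | cons e es ih => exact mul_le_one₀ (S.p_le_one e x) (S.cylWeight_nonneg es _) (ih _)

lemma measurable_cylWeight (es : List E) : Measurable fun x => S.cylWeight x es := by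
  induction es with
  | nil => exact measurable_const
  | cons e es ih => exact (S.p_meas e).mul (ih.comp (S.w_meas e))

lemma integrable_cylWeight [IsFiniteMeasure μ] (es : List E) :
    Integrable (fun x => S.cylWeight x es) μ :=
  (integrable_const (1 : ℝ)).mono' (S.measurable_cylWeight es).aestronglyMeasurable
    (Eventually.of_forall fun x => by
      rw [Real.norm_of_nonneg (S.cylWeight_nonneg es x)]
      exact S.cylWeight_le_one es x)

lemma cylWeight_pair_eq_zero {e e' : E} (h : S.τ e ≠ S.ι e') (x : K) :
    S.cylWeight x [e, e'] = 0 := by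
  rcases eq_or_ne (S.p e x) 0 with h0 | h0
  · simp [h0]
  · have hw : S.w e x ∉ S.Ks (S.ι e') := fun hw =>
      h (S.eq_of_mem_Ks (S.w_maps e (S.mem_Ks_of_p_ne_zero h0)) hw)
    simp [S.p_zero e' _ hw]

/-- The expectation of `f` over the first `n` edges of the Markov chain started at `x`. -/
noncomputable def pathSum (n : ℕ) (x : K) (f : (Fin n → E) → ℝ) : ℝ :=
  ∑ es : Fin n → E, S.cylWeight x (List.ofFn es) * f es

lemma pathSum_zero (x : K) (f : (Fin 0 → E) → ℝ) : S.pathSum 0 x f = f Fin.elim0 := by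
  simp [pathSum, Subsingleton.elim _ (Fin.elim0 : Fin 0 → E)]

lemma pathSum_succ (n : ℕ) (x : K) (f : (Fin (n + 1) → E) → ℝ) :
    S.pathSum (n + 1) x f =
      ∑ e, S.p e x * S.pathSum n (S.w e x) fun es => f (Fin.cons e es) := by
  rw [pathSum, ← (Fin.consEquiv fun _ => E).sum_comp, Fintype.sum_prod_type]
  refine Finset.sum_congr rfl fun e _ => ?_
  rw [pathSum, Finset.mul_sum]
  refine Finset.sum_congr rfl fun es _ => ?_
  change S.cylWeight x (List.ofFn (Fin.cons e es)) * f (Fin.cons e es) = _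
  rw [List.ofFn_cons, cylWeight_cons, mul_assoc]

lemma pathSum_mono {n : ℕ} (x : K) {f g : (Fin n → E) → ℝ} (h : ∀ es, f es ≤ g es) :
    S.pathSum n x f ≤ S.pathSum n x g :=
  Finset.sum_le_sum fun es _ => mul_le_mul_of_nonneg_left (h es) (S.cylWeight_nonneg _ x)

lemma pathSum_add {n : ℕ} (x : K) (f g : (Fin n → E) → ℝ) :
    S.pathSum n x (fun es => f es + g es) = S.pathSum n x f + S.pathSum n x g := by
  simp only [pathSum, mul_add, Finset.sum_add_distrib]

lemma pathSum_succ_le_of_mem {n : ℕ} {x : K} {v : Fin N} (hx : x ∈ S.Ks v)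
    {f g : (Fin (n + 1) → E) → ℝ} (h : ∀ e es, S.ι e = v → f (Fin.cons e es) ≤ g (Fin.cons e es)) :
    S.pathSum (n + 1) x f ≤ S.pathSum (n + 1) x g := by
  rw [S.pathSum_succ, S.pathSum_succ]
  exact S.sum_p_mul_le_of_mem hx fun e he => S.pathSum_mono _ fun es => h e es he

lemma integral_pathSum [IsFiniteMeasure μ] (n : ℕ) (f : (Fin n → E) → ℝ) :
    ∫ x, S.pathSum n x f ∂μ = ∑ es, (∫ x, S.cylWeight x (List.ofFn es) ∂μ) * f es := by
  unfold pathSum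
  rw [integral_finsetSum _ fun es _ => (S.integrable_cylWeight _).mul_const _]
  exact Finset.sum_congr rfl fun es _ => integral_mul_const _ _

theorem pathSum_dist_pathMap_le (n : ℕ) {u y : K} {v : Fin N} (hu : u ∈ S.Ks v)
    (hy : y ∈ S.Ks v) :
    S.pathSum n u (fun es => dist (S.pathMap (List.ofFn es) u) (S.pathMap (List.ofFn es) y))
      ≤ S.a ^ n * dist u y := by
  induction n generalizing u y v with
  | zero => simp [pathSum_zero]
  | succ n ih =>
    calc _ ≤ ∑ e, S.p e u * (S.a ^ n * dist (S.w e u) (S.w e y)) := by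
          rw [pathSum_succ]
          refine S.sum_p_mul_le_of_mem hu fun e he => ?_
          subst he
          simpa only [List.ofFn_cons, pathMap_cons] using
            ih (S.w_maps e hu) (S.w_maps e hy)
      _ = S.a ^ n * ∑ e, S.p e u * dist (S.w e u) (S.w e y) := by
          rw [Finset.mul_sum]
          exact Finset.sum_congr rfl fun e _ => by ring
      _ ≤ S.a ^ n * (S.a * dist u y) :=
          mul_le_mul_of_nonneg_left (S.contractive v u hu y hy) (pow_nonneg S.a_pos.le n)
      _ = S.a ^ (n + 1) * dist u y := by ring

section Coding

variable (xs : Fin N → K)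

noncomputable def codePoint {n : ℕ} (es : Fin (n + 1) → E) : K :=
  S.pathMap (List.ofFn es) (xs (S.ι (es 0)))

lemma codePoint_cons {n : ℕ} (e : E) (es : Fin (n + 1) → E) :
    S.codePoint xs (Fin.cons e es) = S.pathMap (List.ofFn es) (S.w e (xs (S.ι e))) := by
  simp [codePoint]

/-- How far the coding point moves when the path is extended by one edge into the past. -/
noncomputable def codeStep {n : ℕ} (es : Fin (n + 2) → E) : ℝ :=
  dist (S.codePoint xs (Fin.tail es)) (S.codePoint xs es)

lemma codeStep_cons {n : ℕ} (e : E) (es : Fin (n + 1) → E) :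
    S.codeStep xs (Fin.cons e es) =
      dist (S.codePoint xs es) (S.pathMap (List.ofFn es) (S.w e (xs (S.ι e)))) := by
  rw [codeStep, Fin.tail_cons, codePoint_cons]

noncomputable def distToBase (x : K) : ℝ := dist x (xs (S.vertex x))

noncomputable def baseConst : ℝ := ∑ e, dist (S.w e (xs (S.ι e))) (xs (S.τ e))

lemma baseConst_nonneg : 0 ≤ S.baseConst xs := Finset.sum_nonneg fun _ _ => dist_nonneg

lemma dist_le_dist_add_baseConst (e : E) (y : K) :
    dist y (xs (S.τ e)) ≤ dist y (S.w e (xs (S.ι e))) + S.baseConst xs :=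
  (dist_triangle _ _ _).trans <| add_le_add_right
    (Finset.single_le_sum (f := fun e => dist (S.w e (xs (S.ι e))) (xs (S.τ e)))
      (fun _ _ => dist_nonneg) (Finset.mem_univ e)) _

end Coding

variable {xs : Fin N → K}

lemma sum_p_mul_distToBase_le (hxs : ∀ i, xs i ∈ S.Ks i) (x : K) :
    ∑ e, S.p e x * S.distToBase xs (S.w e x) ≤ S.a * S.distToBase xs x + S.baseConst xs := by
  have hx := S.mem_Ks_vertex x
  rw [distToBase]
  generalize S.vertex x = v at hx ⊢
  calc _ ≤ ∑ e, S.p e x * (dist (S.w e x) (S.w e (xs v)) + S.baseConst xs) := by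
        refine S.sum_p_mul_le_of_mem hx fun e he => ?_
        subst he
        rw [distToBase, S.vertex_eq (S.w_maps e hx)]
        exact S.dist_le_dist_add_baseConst xs e _
    _ = ∑ e, S.p e x * dist (S.w e x) (S.w e (xs v)) + S.baseConst xs := by
        simp only [mul_add, Finset.sum_add_distrib, sum_p_mul_const]
    _ ≤ S.a * dist x (xs v) + S.baseConst xs :=
        add_le_add (S.contractive v x hx (xs v) (hxs v)) le_rfl

lemma pathSum_codeStep_cons_le (hxs : ∀ i, xs i ∈ S.Ks i) {e : E} {x : K}
    (hx : x ∈ S.Ks (S.ι e)) (n : ℕ) :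
    S.pathSum (n + 1) (S.w e x) (fun es => S.codeStep xs (Fin.cons e es)) ≤
      S.a ^ (n + 1) * (2 * dist (S.w e x) (S.w e (xs (S.ι e))) + S.baseConst xs) := by
  set u := S.w e x
  set y := S.w e (xs (S.ι e))
  have hu : u ∈ S.Ks (S.τ e) := S.w_maps e hx
  calc _ ≤ S.pathSum (n + 1) u (fun es =>
            dist (S.pathMap (List.ofFn es) u) (S.pathMap (List.ofFn es) (xs (S.τ e))) +
              dist (S.pathMap (List.ofFn es) u) (S.pathMap (List.ofFn es) y)) := by
        refine S.pathSum_succ_le_of_mem hu fun e' es he' => ?_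
        rw [codeStep_cons, codePoint, Fin.cons_zero, he']
        exact dist_triangle_left _ _ _
    _ ≤ S.a ^ (n + 1) * dist u (xs (S.τ e)) + S.a ^ (n + 1) * dist u y := by
        rw [pathSum_add]
        exact add_le_add (S.pathSum_dist_pathMap_le _ hu (hxs _))
          (S.pathSum_dist_pathMap_le _ hu (S.w_maps e (hxs _)))
    _ ≤ S.a ^ (n + 1) * (2 * dist u y + S.baseConst xs) := by
        have := S.dist_le_dist_add_baseConst xs e u
        have := pow_nonneg S.a_pos.le (n + 1)
        nlinarith

theorem pathSum_codeStep_le (hxs : ∀ i, xs i ∈ S.Ks i) (n : ℕ) (x : K) :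
    S.pathSum (n + 2) x (S.codeStep xs) ≤
      S.a ^ (n + 1) * (2 * S.a * S.distToBase xs x + S.baseConst xs) := by
  have hx := S.mem_Ks_vertex x
  rw [distToBase]
  generalize S.vertex x = v at hx ⊢
  calc _ ≤ ∑ e, S.p e x * (S.a ^ (n + 1) * (2 * dist (S.w e x) (S.w e (xs v)) +
          S.baseConst xs)) := by
        rw [pathSum_succ]
        refine S.sum_p_mul_le_of_mem hx fun e he => ?_
        subst he
        exact S.pathSum_codeStep_cons_le hxs hx n
    _ = S.a ^ (n + 1) * (2 * ∑ e, S.p e x * dist (S.w e x) (S.w e (xs v)) +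
          S.baseConst xs) := by
        have hsplit : ∀ e, S.p e x * (S.a ^ (n + 1) * (2 * dist (S.w e x) (S.w e (xs v)) +
            S.baseConst xs)) = S.a ^ (n + 1) * 2 * (S.p e x * dist (S.w e x) (S.w e (xs v))) +
              S.p e x * (S.a ^ (n + 1) * S.baseConst xs) := fun e => by ring
        simp only [hsplit, Finset.sum_add_distrib, ← Finset.mul_sum, sum_p_mul_const]
        ring
    _ ≤ S.a ^ (n + 1) * (2 * S.a * dist x (xs v) + S.baseConst xs) := by
        have := S.contractive v x hx (xs v) (hxs v)
        have := pow_nonneg S.a_pos.le (n + 1)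
        nlinarith

lemma sum_ofReal_p (x : K) : ∑ e, ENNReal.ofReal (S.p e x) = 1 := by
  rw [← ENNReal.ofReal_sum_of_nonneg fun e _ => S.p_nonneg e x, S.p_sum_one, ENNReal.ofReal_one]

lemma measurable_sum_ofReal_p_mul_comp {f : K → ℝ≥0∞} (hf : Measurable f) :
    Measurable fun x => ∑ e, ENNReal.ofReal (S.p e x) * f (S.w e x) :=
  Finset.measurable_sum _ fun e _ =>
    (ENNReal.measurable_ofReal.comp (S.p_meas e)).mul (hf.comp (S.w_meas e))

lemma lintegral_sum_ofReal_p_mul_comp (hinv : S.adjoint μ = μ) {f : K → ℝ≥0∞}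
    (hf : Measurable f) :
    ∫⁻ x, ∑ e, ENNReal.ofReal (S.p e x) * f (S.w e x) ∂μ = ∫⁻ x, f x ∂μ := by
  have hκ : Measurable fun x : K => ∑ e, ENNReal.ofReal (S.p e x) • Measure.dirac (S.w e x) := by
    refine Measure.measurable_of_measurable_coe _ fun s hs => ?_
    simp only [Measure.finsetSum_apply, Measure.smul_apply, smul_eq_mul,
      Measure.dirac_apply' _ hs]
    exact S.measurable_sum_ofReal_p_mul_comp (measurable_one.indicator hs)
  conv_rhs => rw [← hinv, adjoint, Measure.lintegral_bind hκ.aemeasurable hf.aemeasurable]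
  refine lintegral_congr fun x => ?_
  rw [lintegral_finsetSum_measure]
  refine Finset.sum_congr rfl fun e _ => ?_
  rw [lintegral_smul_measure, lintegral_dirac' _ hf, smul_eq_mul]

section Drift

variable [IsProbabilityMeasure μ] {φ : K → ℝ≥0∞} {A C : ℝ≥0∞}

lemma mul_lintegral_indicator_le_of_drift (hinv : S.adjoint μ = μ) (hφ : Measurable φ)
    (hA : A ≤ 1) (hdrift : ∀ x, ∑ e, ENNReal.ofReal (S.p e x) * φ (S.w e x) ≤ A * φ x + C)
    {T : ℝ≥0∞} (hT : T ≠ ∞) :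
    (1 - A) * ∫⁻ x, {x | φ x ≤ T}.indicator φ x ∂μ ≤ C := by
  set ψ := fun x => min (φ x) T
  have hψ : Measurable ψ := hφ.min measurable_const
  -- `∫⁻ ψ` is finite and `U`-invariant, so it cancels from both sides below.
  have hψ_fin : ∫⁻ x, ψ x ∂μ ≠ ∞ :=
    ne_top_of_le_ne_top (by simpa using hT)
      ((lintegral_mono fun x => min_le_right (φ x) T).trans_eq (lintegral_const T))
  have hpt : ∀ x, ∑ e, ENNReal.ofReal (S.p e x) * ψ (S.w e x) +
      (1 - A) * {x | φ x ≤ T}.indicator φ x ≤ ψ x + C := by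
    intro x
    by_cases hx : φ x ≤ T
    · calc _ ≤ ∑ e, ENNReal.ofReal (S.p e x) * φ (S.w e x) + (1 - A) * φ x := by
            rw [Set.indicator_of_mem (show x ∈ {x | φ x ≤ T} from hx)]
            gcongr with e
            exact min_le_left _ _
        _ ≤ A * φ x + C + (1 - A) * φ x := by gcongr; exact hdrift x
        _ = ψ x + C := by
            rw [add_right_comm, ← add_mul, add_tsub_cancel_of_le hA, one_mul]
            exact congrArg (· + C) (min_eq_left hx).symm
    · calc _ = ∑ e, ENNReal.ofReal (S.p e x) * ψ (S.w e x) := by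
            rw [Set.indicator_of_notMem (show x ∉ {x | φ x ≤ T} from hx), mul_zero, add_zero]
        _ ≤ ∑ e, ENNReal.ofReal (S.p e x) * T := by
            gcongr with e
            exact min_le_right _ _
        _ = ψ x := by
            rw [← Finset.sum_mul, S.sum_ofReal_p, one_mul]
            exact (min_eq_right (not_le.mp hx).le).symm
        _ ≤ ψ x + C := le_self_add
  have hint := lintegral_mono (μ := μ) hpt
  rw [lintegral_add_left (S.measurable_sum_ofReal_p_mul_comp hψ),
    lintegral_const_mul _ (hφ.indicator (measurableSet_le hφ measurable_const)),
    S.lintegral_sum_ofReal_p_mul_comp hinv hψ, lintegral_add_right _ measurable_const,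
    lintegral_const, measure_univ, mul_one] at hint
  exact ENNReal.le_of_add_le_add_left hψ_fin hint

theorem mul_lintegral_le_of_drift (hinv : S.adjoint μ = μ) (hφ : Measurable φ)
    (hφ_fin : ∀ x, φ x ≠ ∞) (hA : A ≤ 1)
    (hdrift : ∀ x, ∑ e, ENNReal.ofReal (S.p e x) * φ (S.w e x) ≤ A * φ x + C) :
    (1 - A) * ∫⁻ x, φ x ∂μ ≤ C := by
  have hsup : ∫⁻ x, φ x ∂μ = ⨆ n : ℕ, ∫⁻ x, {x | φ x ≤ n}.indicator φ x ∂μ := by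
    rw [← lintegral_iSup (fun n => hφ.indicator (measurableSet_le hφ measurable_const))
      fun m n hmn x => Set.indicator_le_indicator_of_subset (s := {x | φ x ≤ m})
        (t := {x | φ x ≤ n}) (fun y (hy : φ y ≤ m) => hy.trans (Nat.cast_le.mpr hmn))
        (fun _ => zero_le) x]
    refine lintegral_congr fun x => le_antisymm ?_ (iSup_le fun n => Set.indicator_le_self _ _ x)
    obtain ⟨n, hn⟩ := ENNReal.exists_nat_gt (hφ_fin x)
    exact le_iSup_of_le n (Set.indicator_of_mem (show x ∈ {x | φ x ≤ n} from hn.le) φ).ge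
  rw [hsup, ENNReal.mul_iSup]
  exact iSup_le fun n =>
    S.mul_lintegral_indicator_le_of_drift hinv hφ hA hdrift (ENNReal.natCast_ne_top n)

end Drift

lemma distToBase_nonneg (x : K) : 0 ≤ S.distToBase xs x := dist_nonneg

lemma distToBase_eq_sum_indicator :
    S.distToBase xs = fun x => ∑ i, (S.Ks i).indicator (fun y => dist y (xs i)) x := by
  funext x
  rw [Finset.sum_eq_single (S.vertex x), Set.indicator_of_mem (S.mem_Ks_vertex x), distToBase]
  · exact fun i _ hi => Set.indicator_of_notMem (fun hx => hi (S.vertex_eq hx).symm) _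
  · exact fun h => absurd (Finset.mem_univ _) h

lemma measurable_distToBase [OpensMeasurableSpace K] : Measurable (S.distToBase xs) := by
  rw [distToBase_eq_sum_indicator]
  exact Finset.measurable_sum _ fun i _ =>
    (continuous_id.dist continuous_const).measurable.indicator (S.Ks_meas i)

lemma integrable_distToBase [OpensMeasurableSpace K] [IsProbabilityMeasure μ]
    (hxs : ∀ i, xs i ∈ S.Ks i) (hinv : S.adjoint μ = μ) : Integrable (S.distToBase xs) μ := by
  have hA : ENNReal.ofReal S.a < 1 := ENNReal.ofReal_lt_one.mpr S.a_lt_one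
  have hmean := S.mul_lintegral_le_of_drift hinv
    (φ := fun x => ENNReal.ofReal (S.distToBase xs x)) S.measurable_distToBase.ennreal_ofReal
    (fun x => ENNReal.ofReal_ne_top) hA.le (C := ENNReal.ofReal (S.baseConst xs)) fun x => by
      rw [← ENNReal.ofReal_mul S.a_pos.le, ← ENNReal.ofReal_add
        (mul_nonneg S.a_pos.le (S.distToBase_nonneg x)) (S.baseConst_nonneg xs)]
      simp only [← ENNReal.ofReal_mul (S.p_nonneg _ x)]
      rw [← ENNReal.ofReal_sum_of_nonneg fun e _ =>
        mul_nonneg (S.p_nonneg e x) (S.distToBase_nonneg _)]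
      exact ENNReal.ofReal_le_ofReal (S.sum_p_mul_distToBase_le hxs x)
  have hfin : ∫⁻ x, ENNReal.ofReal (S.distToBase xs x) ∂μ ≠ ∞ := fun htop => by
    rw [htop, ENNReal.mul_top (tsub_pos_of_lt hA).ne'] at hmean
    exact ENNReal.ofReal_ne_top (top_le_iff.mp hmean)
  exact ⟨S.measurable_distToBase.aestronglyMeasurable,
    (hasFiniteIntegral_iff_ofReal (Eventually.of_forall fun x => dist_nonneg)).mpr hfin.lt_top⟩

theorem integral_pathSum_codeStep_le [OpensMeasurableSpace K] [IsProbabilityMeasure μ]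
    (hxs : ∀ i, xs i ∈ S.Ks i) (hinv : S.adjoint μ = μ) (n : ℕ) :
    ∫ x, S.pathSum (n + 2) x (S.codeStep xs) ∂μ ≤
      S.a ^ (n + 1) * (2 * S.a * ∫ x, S.distToBase xs x ∂μ + S.baseConst xs) := by
  have hg := S.integrable_distToBase hxs hinv
  have hpath : Integrable (fun x => S.pathSum (n + 2) x (S.codeStep xs)) μ :=
    integrable_finsetSum _ fun es _ => (S.integrable_cylWeight _).mul_const _
  refine (integral_mono (g := fun x =>
      S.a ^ (n + 1) * (2 * S.a * S.distToBase xs x + S.baseConst xs)) hpath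
    (((hg.const_mul _).add (integrable_const _)).const_mul _)
    (S.pathSum_codeStep_le hxs n)).trans_eq ?_
  rw [integral_const_mul, integral_add (hg.const_mul _) (integrable_const _), integral_const_mul,
    integral_const, probReal_univ, one_smul]

lemma comp_eq_pathMap (σ : ℤ → E) (m : ℕ) (z : K) :
    S.comp σ m z = S.pathMap (List.ofFn (pastBlock σ m)) z := by
  induction m generalizing z with
  | zero => simp [comp, pastBlock]
  | succ m ih => rw [comp, ih, pastBlock_succ, List.ofFn_cons, pathMap_cons]

lemma codeSeq_eq_codePoint (σ : ℤ → E) (m : ℕ) :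
    S.codeSeq xs σ m = S.codePoint xs (pastBlock σ m) := by
  simp [codeSeq, codePoint, comp_eq_pathMap, pastBlock]

lemma dist_codeSeq_succ (σ : ℤ → E) (m : ℕ) :
    dist (S.codeSeq xs σ m) (S.codeSeq xs σ (m + 1)) = S.codeStep xs (pastBlock σ (m + 1)) := by
  rw [codeSeq_eq_codePoint, codeSeq_eq_codePoint, codeStep, pastBlock_succ, Fin.tail_cons]

lemma shiftZ_mem_SigmaG {σ : ℤ → E} (h : σ ∈ S.SigmaG) (k : ℤ) : shiftZ E k σ ∈ S.SigmaG :=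
  fun j => by simpa [shiftZ, add_right_comm] using h (j + k)

section MarkovMeasure

variable [MeasurableSpace E] {M : Measure (ℤ → E)}

lemma ae_mem_SigmaG (hM : S.IsGMarkovMeasure μ M) : ∀ᵐ σ ∂M, σ ∈ S.SigmaG := by
  refine ae_all_iff.2 fun j => ae_iff.2 <| measure_mono_null (t := ⋃ q : E × E,
    ⋃ (_ : S.τ q.1 ≠ S.ι q.2), cylSet j [q.1, q.2]) (fun σ hσ => ?_) <|
      measure_iUnion_null fun q => measure_iUnion_null fun hq => ?_
  · simp only [Set.mem_iUnion]
    exact ⟨(σ j, σ (j + 1)), hσ, by simp [cylSet]⟩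
  · rw [show M (cylSet j [q.1, q.2]) = _ from hM.2 j [q.1, q.2]]
    simp [S.cylWeight_pair_eq_zero hq]

lemma measure_lt_dist_codeSeq_le (hM : S.IsGMarkovMeasure μ M) [IsFiniteMeasure μ] {b : ℝ}
    (hb : 0 < b) (k : ℤ) (m : ℕ) :
    M {σ | b ^ m < dist (S.codeSeq xs (shiftZ E k σ) m) (S.codeSeq xs (shiftZ E k σ) (m + 1))}
      ≤ ENNReal.ofReal ((∫ x, S.pathSum (m + 2) x (S.codeStep xs) ∂μ) / b ^ m) := by
  classical
  have hW : ∀ es : Fin (m + 2) → E, 0 ≤ ∫ x, S.cylWeight x (List.ofFn es) ∂μ := fun es =>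
    integral_nonneg (S.cylWeight_nonneg _)
  calc _ ≤ M (⋃ es ∈ Finset.univ.filter (fun es => b ^ m < S.codeStep xs es),
        cylSet (k - (m + 1 : ℕ)) (List.ofFn es)) := measure_mono fun σ hσ =>
          Set.mem_iUnion₂.2 ⟨pastBlock (shiftZ E k σ) (m + 1), by
            simpa [dist_codeSeq_succ] using hσ, mem_cylSet_pastBlock_shiftZ σ k (m + 1)⟩
    _ ≤ ∑ es ∈ Finset.univ.filter (fun es => b ^ m < S.codeStep xs es),
        M (cylSet (k - (m + 1 : ℕ)) (List.ofFn es)) := measure_biUnion_finset_le _ _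
    _ = ENNReal.ofReal (∑ es ∈ Finset.univ.filter (fun es => b ^ m < S.codeStep xs es),
        ∫ x, S.cylWeight x (List.ofFn es) ∂μ) := by
        rw [ENNReal.ofReal_sum_of_nonneg fun es _ => hW es]
        exact Finset.sum_congr rfl fun es _ => hM.2 _ _
    _ ≤ _ := by
        rw [integral_pathSum]
        exact ENNReal.ofReal_le_ofReal <| Finset.sum_filter_lt_le_sum_mul_div _
          (fun es _ => hW es) (fun _ _ => dist_nonneg) (pow_pos hb m)

theorem ae_eventually_dist_codeSeq_le [OpensMeasurableSpace K] [IsProbabilityMeasure μ]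
    (hM : S.IsGMarkovMeasure μ M) (hxs : ∀ i, xs i ∈ S.Ks i) (hinv : S.adjoint μ = μ) {b : ℝ}
    (hab : S.a < b) (k : ℤ) :
    ∀ᵐ σ ∂M, ∀ᶠ m in atTop,
      dist (S.codeSeq xs (shiftZ E k σ) m) (S.codeSeq xs (shiftZ E k σ) (m + 1)) ≤ b ^ m := by
  have hb : 0 < b := S.a_pos.trans hab
  set Q := S.a * (2 * S.a * ∫ x, S.distToBase xs x ∂μ + S.baseConst xs)
  have hQ : 0 ≤ Q := mul_nonneg S.a_pos.le (add_nonneg (mul_nonneg (by linarith [S.a_pos])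
    (integral_nonneg (S.distToBase_nonneg))) (S.baseConst_nonneg xs))
  have hr : 0 ≤ S.a / b := div_nonneg S.a_pos.le hb.le
  have hsummable : Summable fun m : ℕ => Q * (S.a / b) ^ m :=
    (summable_geometric_of_lt_one hr ((div_lt_one hb).2 hab)).mul_left Q
  have hbound : ∀ m : ℕ, M {σ | b ^ m < dist (S.codeSeq xs (shiftZ E k σ) m)
      (S.codeSeq xs (shiftZ E k σ) (m + 1))} ≤ ENNReal.ofReal (Q * (S.a / b) ^ m) := by
    intro m
    refine (S.measure_lt_dist_codeSeq_le hM hb k m).trans (ENNReal.ofReal_le_ofReal ?_)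
    calc _ ≤ S.a ^ (m + 1) * (2 * S.a * ∫ x, S.distToBase xs x ∂μ + S.baseConst xs) / b ^ m :=
          div_le_div_of_nonneg_right (S.integral_pathSum_codeStep_le hxs hinv m)
            (pow_pos hb m).le
      _ = Q * (S.a / b) ^ m := by
          rw [div_pow]
          field_simp
          ring
  filter_upwards [ae_eventually_notMem <| ne_top_of_le_ne_top
    (ENNReal.ofReal_tsum_of_nonneg (fun m => mul_nonneg hQ (pow_nonneg hr m)) hsummable ▸
      ENNReal.ofReal_ne_top) (ENNReal.tsum_le_tsum hbound)] with σ hσ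
  exact hσ.mono fun m hm => not_lt.mp hm

end MarkovMeasure

end CMS

theorem cms_Y_full_measure_general
    {K : Type*} [MetricSpace K] [MeasurableSpace K] [BorelSpace K]
    {N : ℕ} {E : Type*} [Fintype E] [MeasurableSpace E] (S : CMS K N E)
    (hProper : ∀ A : Set K, Bornology.IsBounded A → IsCompact (closure A))
    (μ : Measure K) (hμ : IsProbabilityMeasure μ) (hinv : S.adjoint μ = μ)
    (M : Measure (ℤ → E)) (hM : S.IsGMarkovMeasure μ M)
    (xs : Fin N → K) (hxs : ∀ i, xs i ∈ S.Ks i) :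
    M (S.Yset xs) = 1 := by
  have := hM.1
  have : ProperSpace K := properSpace_of_isCompact_closure hProper
  obtain ⟨b, hab, hb₁⟩ := exists_between S.a_lt_one
  have hD : ∀ k : ℤ, ∀ᵐ σ ∂M, shiftZ E k σ ∈ S.Dset xs := fun k => by
    filter_upwards [S.ae_mem_SigmaG hM, S.ae_eventually_dist_codeSeq_le hM hxs hinv hab k]
      with σ hG hsmall
    exact ⟨S.shiftZ_mem_SigmaG hG k,
      exists_tendsto_of_eventually_dist_le_pow (S.a_pos.trans hab).le hb₁ hsmall⟩
  have hY : ∀ᵐ σ ∂M, σ ∈ S.Yset xs := by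
    filter_upwards [ae_all_iff.2 hD] with σ hσ
    exact Set.mem_iInter.2 fun n => ⟨shiftZ E (-n) σ, hσ (-n), by funext j; simp [shiftZ]⟩
  rw [measure_congr ((ae_eq_univ (s := S.Yset xs)).2 hY), measure_univ]

theorem cms_Y_full_measure
    {K : Type*} [MetricSpace K] [MeasurableSpace K] [BorelSpace K]
    {N : ℕ} {E : Type*} [Fintype E] [MeasurableSpace E] (S : CMS K N E)
    (hProper : ∀ A : Set K, Bornology.IsBounded A → IsCompact (closure A))
    (hOpen : ∀ i, IsOpen (S.Ks i))
    (hUC : ∀ e, UniformContinuousOn (S.p e) (S.Ks (S.ι e)))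
    (δ : ℝ) (hδ : 0 < δ) (hp : ∀ e, ∀ x ∈ S.Ks (S.ι e), δ ≤ S.p e x)
    (μ : Measure K) (hμ : IsProbabilityMeasure μ) (hinv : S.adjoint μ = μ)
    (M : Measure (ℤ → E)) (hM : S.IsGMarkovMeasure μ M)
    (xs : Fin N → K) (hxs : ∀ i, xs i ∈ S.Ks i)
    (hDini : ∀ e, DiniOn (S.p e) (S.Ks (S.ι e))) :
    M (S.Yset xs) = 1 :=
  cms_Y_full_measure_general S hProper μ hμ hinv M hM xs hxs
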